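/- arXiv:2502.09934 — 2 statements merged into one kernel-verified Lean document; each statement's English description precedes it below -/
import Mathlib

section
/- Suppose L(r₁, r₂) = f₁(r₁) + f₂(r₂) − h₁(r₁) h₂(r₂) for scalar functions f₁, f₂, h₁, h₂. Let C^X ∈ ℝ^{n×n}, C^Y ∈ ℝ^{m×m}, define the 4-tensor M by M_{i,j,i',j'} = L(C^X_{i,i'}, C^Y_{j,j'}), and let γ ∈ ℝ^{n×m} with row-sum vector γ₁ = γ 1_m and column-sum vector γ₂ = γ^⊤ 1_n. Then M ∘ γ = f₁(C^X) γ₁ 1_m^⊤ + 1_n γ₂^⊤ f₂(C^Y)^⊤ − h₁(C^X) γ h₂(C^Y)^⊤, where f₁(C^X) denotes entrywise application. -/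
open Finset

section SeparableKernel

variable {R ι κ : Type*} [CommRing R] [Fintype ι] [Fintype κ]

theorem sum_sum_mul_eq_sum_colSum_mul (b : κ → R) (γ : ι → κ → R) :
    ∑ i, ∑ j, b j * γ i j = ∑ j, (∑ i, γ i j) * b j := by
  rw [sum_comm]
  exact sum_congr rfl fun j _ => by
    rw [sum_mul]
    exact sum_congr rfl fun i _ => mul_comm _ _

theorem sum_sum_separable_mul (a : ι → R) (b : κ → R) (c : ι → R) (d : κ → R)
    (γ : ι → κ → R) :
    ∑ i, ∑ j, (a i + b j - c i * d j) * γ i j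
      = (∑ i, a i * ∑ j, γ i j) + (∑ j, (∑ i, γ i j) * b j)
        - ∑ i, ∑ j, c i * γ i j * d j := by
  have hsplit : ∀ i j, (a i + b j - c i * d j) * γ i j
      = a i * γ i j + b j * γ i j - c i * γ i j * d j := fun i j => by ring
  simp only [hsplit, sum_add_distrib, sum_sub_distrib, mul_sum]
  rw [sum_sum_mul_eq_sum_colSum_mul]

end SeparableKernel

/-- Separable-cost decomposition of the tensor action `M ∘ γ`. -/
theorem tensor_action_decomposition {n m : ℕ}
    (f₁ f₂ h₁ h₂ : ℝ → ℝ) (CX : Fin n → Fin n → ℝ) (CY : Fin m → Fin m → ℝ)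
    (L : ℝ → ℝ → ℝ) (hL : ∀ r₁ r₂, L r₁ r₂ = f₁ r₁ + f₂ r₂ - h₁ r₁ * h₂ r₂)
    (M : Fin n → Fin m → Fin n → Fin m → ℝ)
    (hM : ∀ i j i' j', M i j i' j' = L (CX i i') (CY j j'))
    (γ : Fin n → Fin m → ℝ) (i : Fin n) (j : Fin m) :
    ∑ i', ∑ j', M i j i' j' * γ i' j'
      = (∑ i', f₁ (CX i i') * (∑ j', γ i' j'))
        + (∑ j', (∑ i', γ i' j') * f₂ (CY j j'))
        - ∑ i', ∑ j', h₁ (CX i i') * γ i' j' * h₂ (CY j j') := by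
  simp only [hM, hL]
  exact sum_sum_separable_mul (fun i' => f₁ (CX i i')) (fun j' => f₂ (CY j j'))
    (fun i' => h₁ (CX i i')) (fun j' => h₂ (CY j j')) γ
end

section
/- In the discrete setting with |μ| ≤ |ν|, let C ≥ 0 be the feature cost matrix, M ≥ 0 the structural cost tensor, and suppose 2λ > ω₁ · (max C)/|μ| + ω₂ · max M. Then every minimizer γ of the fused partial GW objective ω₁⟨C,γ⟩ + ω₂⟨M, γ⊗γ⟩ + λ(|μ|² + |ν|² − 2|γ|²) over Γ_≤(μ,ν) satisfies |γ| = |μ| = min(|μ|,|ν|). -/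
/-!
Fill any sub-coupling `γ` up to full mass by adding the product of its row and column slacks
(normalised by the total column slack); this only increases entries. On `γ ≤ γ'` the linear cost
grows by at most `max C · (|γ'| - |γ|) ≤ max C / |μ| · (|γ'|² - |γ|²)` and the quadratic cost by at
most `max M · (|γ'|² - |γ|²)`, while the mass penalty drops by exactly `2λ (|γ'|² - |γ|²)`. So for
`2λ > ω₁ max C / |μ| + ω₂ max M` the full-mass extension of a deficient `γ` is strictly cheaper.
-/

open Finset

namespace FusedPartialGW

section SubCoupling

variable {ι κ : Type*} [Fintype ι] [Fintype κ]

def subCouplings (p : ι → ℝ) (q : κ → ℝ) : Set (ι → κ → ℝ) :=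
  {γ | (∀ i j, 0 ≤ γ i j) ∧ (∀ i, ∑ j, γ i j ≤ p i) ∧ (∀ j, ∑ i, γ i j ≤ q j)}

variable {p : ι → ℝ} {q : κ → ℝ} {γ : ι → κ → ℝ}

theorem sum_sum_le_of_mem_subCouplings (hγ : γ ∈ subCouplings p q) :
    ∑ i, ∑ j, γ i j ≤ ∑ i, p i :=
  sum_le_sum fun i _ => hγ.2.1 i

theorem exists_le_mem_subCouplings_sum_sum_eq (hpq : ∑ i, p i ≤ ∑ j, q j)
    (hγ : γ ∈ subCouplings p q) :
    ∃ γ' ∈ subCouplings p q, γ ≤ γ' ∧ ∑ i, ∑ j, γ' i j = ∑ i, p i := by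
  obtain ⟨hγ0, hrow, hcol⟩ := hγ
  set a : ι → ℝ := fun i => p i - ∑ j, γ i j
  set b : κ → ℝ := fun j => q j - ∑ i, γ i j
  set t := ∑ j, b j
  have ha : ∀ i, 0 ≤ a i := fun i => sub_nonneg.2 (hrow i)
  have hb : ∀ j, 0 ≤ b j := fun j => sub_nonneg.2 (hcol j)
  have ht : 0 ≤ t := sum_nonneg fun j _ => hb j
  have hat : ∑ i, a i ≤ t := by
    simp only [a, b, t, sum_sub_distrib]
    rw [sum_comm (f := fun i j => γ i j)]
    linarith
  have hbump (i : ι) (j : κ) : 0 ≤ a i * b j / t := div_nonneg (mul_nonneg (ha i) (hb j)) ht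
  have hbump_row (i : ι) : ∑ j, a i * b j / t = a i * (t / t) := by
    rw [← sum_div, ← mul_sum, mul_div_assoc]
  -- if `t = 0` the bump is `0` (as `x / 0 = 0`), but then there is no row slack either
  have hbump_total : ∑ i, a i * (t / t) = ∑ i, a i := by
    rcases ht.eq_or_lt with h0 | hpos
    · have : ∑ i, a i = 0 := le_antisymm (h0 ▸ hat) (sum_nonneg fun i _ => ha i)
      simp [← h0, this]
    · simp [div_self hpos.ne']
  refine ⟨fun i j => γ i j + a i * b j / t, ⟨fun i j => add_nonneg (hγ0 i j) (hbump i j),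
    fun i => ?_, fun j => ?_⟩, fun i j => le_add_of_nonneg_right (hbump i j), ?_⟩
  · calc ∑ j, (γ i j + a i * b j / t) = ∑ j, γ i j + a i * (t / t) := by
          rw [sum_add_distrib, hbump_row]
      _ ≤ ∑ j, γ i j + a i := by gcongr; exact mul_le_of_le_one_right (ha i) (div_self_le_one t)
      _ = p i := by simp [a]
  · calc ∑ i, (γ i j + a i * b j / t) = ∑ i, γ i j + b j * ((∑ i, a i) / t) := by
          rw [sum_add_distrib, ← sum_div, ← sum_mul]; ring
      _ ≤ ∑ i, γ i j + b j := by
          gcongr; exact mul_le_of_le_one_right (hb j) (div_le_one_of_le₀ hat ht)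
      _ = q j := by simp [b]
  · calc ∑ i, ∑ j, (γ i j + a i * b j / t) = ∑ i, ∑ j, γ i j + ∑ i, a i * (t / t) := by
          simp only [sum_add_distrib, hbump_row]
      _ = ∑ i, p i := by simp [hbump_total, a, sum_sub_distrib]

end SubCoupling

section CostIncrease

variable {α : Type*} [Fintype α] {γ γ' : α → ℝ} {c : ℝ}

theorem sum_mul_sub_sum_mul_le {C : α → ℝ} (hC : ∀ x, C x ≤ c) (hγ : γ ≤ γ') :
    ∑ x, C x * γ' x - ∑ x, C x * γ x ≤ c * (∑ x, γ' x - ∑ x, γ x) := by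
  simp only [← sum_sub_distrib, mul_sum, ← mul_sub]
  exact sum_le_sum fun x _ => mul_le_mul_of_nonneg_right (hC x) (sub_nonneg.2 (hγ x))

theorem sum_sum_mul_mul_sub_le {M : α → α → ℝ} (hM : ∀ x y, M x y ≤ c) (hγ0 : 0 ≤ γ)
    (hγ : γ ≤ γ') :
    ∑ x, ∑ y, M x y * γ' x * γ' y - ∑ x, ∑ y, M x y * γ x * γ y ≤
      c * ((∑ x, γ' x) ^ 2 - (∑ x, γ x) ^ 2) := by
  rw [sq, sq, sum_mul_sum, sum_mul_sum]
  simp only [← sum_sub_distrib, mul_sum]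
  refine sum_le_sum fun x _ => sum_le_sum fun y _ => ?_
  have hprod : γ x * γ y ≤ γ' x * γ' y :=
    mul_le_mul (hγ x) (hγ y) (hγ0 y) ((hγ0 x).trans (hγ x))
  calc M x y * γ' x * γ' y - M x y * γ x * γ y = M x y * (γ' x * γ' y - γ x * γ y) := by ring
    _ ≤ c * (γ' x * γ' y - γ x * γ y) := mul_le_mul_of_nonneg_right (hM x y) (by linarith)

end CostIncrease

end FusedPartialGW

open FusedPartialGW

theorem fpgw_large_lambda_full_mass_general {n m : ℕ} [NeZero n] [NeZero m]
    (p : Fin n → ℝ) (q : Fin m → ℝ)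
    (hppos : 0 < ∑ i, p i) (hpq : ∑ i, p i ≤ ∑ j, q j)
    (C : Fin n → Fin m → ℝ) (hC : ∀ i j, 0 ≤ C i j)
    (M : Fin n → Fin m → Fin n → Fin m → ℝ)
    (ω₁ ω₂ lam : ℝ) (hω₁ : 0 ≤ ω₁) (hω₂ : 0 ≤ ω₂)
    (hlam : ω₁ * ((Finset.univ : Finset (Fin n × Fin m)).sup'
          Finset.univ_nonempty (fun x => C x.1 x.2)) / (∑ i, p i)
        + ω₂ * ((Finset.univ : Finset ((Fin n × Fin m) × Fin n × Fin m)).sup'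
          Finset.univ_nonempty (fun x => M x.1.1 x.1.2 x.2.1 x.2.2))
        < 2 * lam)
    (Γle : Set (Fin n → Fin m → ℝ))
    (hΓle : Γle = {γ | (∀ i j, 0 ≤ γ i j) ∧ (∀ i, ∑ j, γ i j ≤ p i) ∧
      (∀ j, ∑ i, γ i j ≤ q j)})
    (J : (Fin n → Fin m → ℝ) → ℝ)
    (hJ : J = fun γ =>
      ω₁ * (∑ i, ∑ j, C i j * γ i j) +
      ω₂ * (∑ i, ∑ j, ∑ i', ∑ j', M i j i' j' * γ i j * γ i' j') +
      lam * ((∑ i, p i) ^ 2 + (∑ j, q j) ^ 2 - 2 * (∑ i, ∑ j, γ i j) ^ 2))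
    (γ : Fin n → Fin m → ℝ) (hγ : γ ∈ Γle) (hmin : ∀ γ' ∈ Γle, J γ ≤ J γ') :
    ∑ i, ∑ j, γ i j = ∑ i, p i := by
  subst hΓle hJ
  set Cmax := univ.sup' univ_nonempty fun x : Fin n × Fin m => C x.1 x.2
  set Mmax := univ.sup' univ_nonempty fun x : (Fin n × Fin m) × Fin n × Fin m =>
    M x.1.1 x.1.2 x.2.1 x.2.2
  have hCle (x : Fin n × Fin m) : C x.1 x.2 ≤ Cmax := le_sup' (fun x => C x.1 x.2) (mem_univ x)
  have hMle (x y : Fin n × Fin m) : M x.1 x.2 y.1 y.2 ≤ Mmax :=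
    le_sup' (fun x => M x.1.1 x.1.2 x.2.1 x.2.2) (mem_univ (x, y))
  refine (sum_sum_le_of_mem_subCouplings hγ).eq_or_lt.resolve_right fun hsS => ?_
  obtain ⟨γ', hγ', hle, hmass⟩ := exists_le_mem_subCouplings_sum_sum_eq hpq hγ
  have hobj := hmin γ' hγ'
  have hlin := sum_mul_sub_sum_mul_le (γ := fun x => γ x.1 x.2) hCle fun x => hle x.1 x.2
  have hquad := sum_sum_mul_mul_sub_le (γ := fun x => γ x.1 x.2) hMle
    (fun x => hγ.1 x.1 x.2) fun x => hle x.1 x.2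
  simp only [Fintype.sum_prod_type, hmass] at hlin hquad hobj
  set S := ∑ i, p i
  set s := ∑ i, ∑ j, γ i j
  have hs : 0 ≤ s := sum_nonneg fun i _ => sum_nonneg fun j _ => hγ.1 i j
  have hgap : 0 < S ^ 2 - s ^ 2 := by nlinarith
  have hdescent :
      2 * lam * (S ^ 2 - s ^ 2) ≤ ω₁ * Cmax * (S - s) + ω₂ * Mmax * (S ^ 2 - s ^ 2) := by
    linarith [mul_le_mul_of_nonneg_left hlin hω₁, mul_le_mul_of_nonneg_left hquad hω₂]
  have hmass_gain : ω₁ * Cmax * (S - s) ≤ ω₁ * Cmax / S * (S ^ 2 - s ^ 2) := by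
    have hCmax : 0 ≤ Cmax := (hC 0 0).trans (hCle (0, 0))
    rw [div_mul_eq_mul_div, le_div_iff₀ hppos]
    nlinarith [mul_nonneg (mul_nonneg hω₁ hCmax) (mul_nonneg (sub_nonneg.2 hsS.le) hs)]
  linarith [mul_lt_mul_of_pos_right hlam hgap]

/-- For large enough `λ`, every minimizer of the fused partial GW objective
transports the full mass `min(|μ|,|ν|) = |μ|`. -/
theorem fpgw_large_lambda_full_mass {n m : ℕ} [NeZero n] [NeZero m]
    (p : Fin n → ℝ) (q : Fin m → ℝ) (hp : ∀ i, 0 ≤ p i) (hq : ∀ j, 0 ≤ q j)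
    (hppos : 0 < ∑ i, p i) (hpq : ∑ i, p i ≤ ∑ j, q j)
    (C : Fin n → Fin m → ℝ) (hC : ∀ i j, 0 ≤ C i j)
    (M : Fin n → Fin m → Fin n → Fin m → ℝ) (hM : ∀ i j i' j', 0 ≤ M i j i' j')
    (ω₁ ω₂ lam : ℝ) (hω₁ : 0 ≤ ω₁) (hω₂ : 0 ≤ ω₂)
    (hlam : ω₁ * ((Finset.univ : Finset (Fin n × Fin m)).sup'
          Finset.univ_nonempty (fun x => C x.1 x.2)) / (∑ i, p i)
        + ω₂ * ((Finset.univ : Finset ((Fin n × Fin m) × Fin n × Fin m)).sup'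
          Finset.univ_nonempty (fun x => M x.1.1 x.1.2 x.2.1 x.2.2))
        < 2 * lam)
    (Γle : Set (Fin n → Fin m → ℝ))
    (hΓle : Γle = {γ | (∀ i j, 0 ≤ γ i j) ∧ (∀ i, ∑ j, γ i j ≤ p i) ∧
      (∀ j, ∑ i, γ i j ≤ q j)})
    (J : (Fin n → Fin m → ℝ) → ℝ)
    (hJ : J = fun γ =>
      ω₁ * (∑ i, ∑ j, C i j * γ i j) +
      ω₂ * (∑ i, ∑ j, ∑ i', ∑ j', M i j i' j' * γ i j * γ i' j') +
      lam * ((∑ i, p i) ^ 2 + (∑ j, q j) ^ 2 - 2 * (∑ i, ∑ j, γ i j) ^ 2))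
    (γ : Fin n → Fin m → ℝ) (hγ : γ ∈ Γle) (hmin : ∀ γ' ∈ Γle, J γ ≤ J γ') :
    ∑ i, ∑ j, γ i j = ∑ i, p i :=
  fpgw_large_lambda_full_mass_general p q hppos hpq C hC M ω₁ ω₂ lam hω₁ hω₂ hlam Γle hΓle J hJ γ hγ
    hmin
end
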